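/- Consequently, the rate matrix $R^{TG}_t = R^*_t + R^\omega_t$ (target guidance added to the valid conditional rate matrix) violates the conditional Kolmogorov equation with error exactly $-\omega/Z^{>0}_t$ at states $z_t \ne z_1$ and error $\omega(Z^{>0}_t - 1)/Z^{>0}_t$ at $z_t = z_1$; in particular the absolute violation is $O(\omega)$, uniformly bounded by $\omega$. -/
import Mathlib


open Finset

variable {Z : Type*} [Fintype Z] [DecidableEq Z]

/-- Linear interpolation noising process `p_{t|1}(z|z_1)`. -/
noncomputable def pt1 (p0 : Z → ℝ) (z1 : Z) (t : ℝ) (z : Z) : ℝ :=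
  t * (if z = z1 then (1 : ℝ) else 0) + (1 - t) * p0 z

/-- `Z^{>0}_t`, the number of states with positive probability at time `t`. -/
noncomputable def Zpos (p0 : Z → ℝ) (z1 : Z) (t : ℝ) : ℕ :=
  (Finset.univ.filter (fun z => 0 < pt1 p0 z1 t z)).card

/-- Target guidance rate matrix `R^ω_t(z_t, z'|z_1) = ω δ(z_1,z')/(Z^{>0}_t p_{t|1}(z_t|z_1))`. -/
noncomputable def Romega (p0 : Z → ℝ) (z1 : Z) (ω t : ℝ) (zt z' : Z) : ℝ :=
  ω * (if z' = z1 then (1 : ℝ) else 0) / ((Zpos p0 z1 t : ℝ) * pt1 p0 z1 t zt)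

/-- Net probability flow into `z_t` induced by a rate matrix `R`, over states with
positive probability. -/
noncomputable def netFlow (p0 : Z → ℝ) (z1 : Z) (t : ℝ) (R : Z → Z → ℝ) (zt : Z) : ℝ :=
  (∑ z' ∈ Finset.univ.filter (fun z' => z' ≠ zt ∧ 0 < pt1 p0 z1 t z'),
      R z' zt * pt1 p0 z1 t z') -
  (∑ z' ∈ Finset.univ.filter (fun z' => z' ≠ zt ∧ 0 < pt1 p0 z1 t z'),
      R zt z' * pt1 p0 z1 t zt)

/-- If `R^*_t` satisfies the conditional Kolmogorov equation, then the target-guided rate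
matrix `R^{TG}_t = R^*_t + R^ω_t` violates it with error exactly `-ω/Z^{>0}_t` at states
`z_t ≠ z_1` and `ω(Z^{>0}_t - 1)/Z^{>0}_t` at `z_t = z_1`; in particular, the absolute
violation is uniformly bounded by `ω`. -/
theorem target_guidance_kolmogorov_violation
    (p0 : Z → ℝ) (hp0_nonneg : ∀ z, 0 ≤ p0 z) (hp0_sum : ∑ z, p0 z = 1)
    (z1 : Z) (t : ℝ) (ht : t ∈ Set.Ioo (0 : ℝ) 1)
    (ω : ℝ) (hω : 0 < ω)
    (hz1pos : 0 < pt1 p0 z1 t z1)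
    (Rstar : Z → Z → ℝ)
    -- `R^*` satisfies the conditional Kolmogorov equation:
    -- `∂_t p_{t|1}(z_t|z_1) = δ(z_t,z_1) - p_0(z_t)` equals the net flow of `R^*`
    (hK : ∀ zt : Z, netFlow p0 z1 t Rstar zt =
      (if zt = z1 then (1 : ℝ) else 0) - p0 zt)
    (zt : Z) (hztpos : 0 < pt1 p0 z1 t zt) :
    (netFlow p0 z1 t (fun a b => Rstar a b + Romega p0 z1 ω t a b) zt -
        ((if zt = z1 then (1 : ℝ) else 0) - p0 zt)
      = if zt = z1 then ω * ((Zpos p0 z1 t : ℝ) - 1) / (Zpos p0 z1 t : ℝ)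
        else -ω / (Zpos p0 z1 t : ℝ)) ∧
    |netFlow p0 z1 t (fun a b => Rstar a b + Romega p0 z1 ω t a b) zt -
        ((if zt = z1 then (1 : ℝ) else 0) - p0 zt)| ≤ ω := by
  obtain ⟨ht0, ht1⟩ := ht
  have hz1mem : z1 ∈ Finset.univ.filter (fun z => 0 < pt1 p0 z1 t z) := by
    simp [hz1pos]
  have hNpos : 0 < Zpos p0 z1 t := Finset.card_pos.mpr ⟨z1, hz1mem⟩
  have hNne : ((Zpos p0 z1 t : ℝ)) ≠ 0 := Nat.cast_ne_zero.mpr hNpos.ne'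
  have hN1 : (1:ℝ) ≤ (Zpos p0 z1 t : ℝ) := by exact_mod_cast hNpos
  have hNposR : (0:ℝ) < (Zpos p0 z1 t : ℝ) := by exact_mod_cast hNpos
  -- linearity of netFlow
  have hlin : netFlow p0 z1 t (fun a b => Rstar a b + Romega p0 z1 ω t a b) zt
      = netFlow p0 z1 t Rstar zt + netFlow p0 z1 t (Romega p0 z1 ω t) zt := by
    unfold netFlow
    simp only [add_mul, Finset.sum_add_distrib]
    ring
  -- the filter set as erase
  have hset : Finset.univ.filter (fun z' => z' ≠ zt ∧ 0 < pt1 p0 z1 t z')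
      = (Finset.univ.filter (fun z => 0 < pt1 p0 z1 t z)).erase zt := by
    ext z
    simp [Finset.mem_erase, and_comm]
  have hcard : ((Finset.univ.filter (fun z' => z' ≠ zt ∧ 0 < pt1 p0 z1 t z')).card : ℝ)
      = (Zpos p0 z1 t : ℝ) - 1 := by
    rw [hset, Finset.card_erase_of_mem (by simp [hztpos])]
    have h1le : 1 ≤ (Finset.univ.filter (fun z => 0 < pt1 p0 z1 t z)).card := hNpos
    rw [Nat.cast_sub h1le]
    norm_num
    rfl
  -- first sum
  have hterm1 : ∀ z' ∈ Finset.univ.filter (fun z' => z' ≠ zt ∧ 0 < pt1 p0 z1 t z'),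
      Romega p0 z1 ω t z' zt * pt1 p0 z1 t z'
        = (if zt = z1 then (1:ℝ) else 0) * (ω / (Zpos p0 z1 t : ℝ)) := by
    intro z' hz'
    have hpz' : (pt1 p0 z1 t z') ≠ 0 := ((Finset.mem_filter.mp hz').2.2).ne'
    unfold Romega
    field_simp
  have h1 : (∑ z' ∈ Finset.univ.filter (fun z' => z' ≠ zt ∧ 0 < pt1 p0 z1 t z'),
        Romega p0 z1 ω t z' zt * pt1 p0 z1 t z')
      = ((Zpos p0 z1 t : ℝ) - 1) * ((if zt = z1 then (1:ℝ) else 0) * (ω / (Zpos p0 z1 t : ℝ))) := by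
    rw [Finset.sum_congr rfl hterm1, Finset.sum_const, nsmul_eq_mul, hcard]
  -- second sum
  have hterm2 : ∀ z' ∈ Finset.univ.filter (fun z' => z' ≠ zt ∧ 0 < pt1 p0 z1 t z'),
      Romega p0 z1 ω t zt z' * pt1 p0 z1 t zt
        = if z' = z1 then ω / (Zpos p0 z1 t : ℝ) else 0 := by
    intro z' hz'
    have hpzt : (pt1 p0 z1 t zt) ≠ 0 := hztpos.ne'
    unfold Romega
    by_cases h : z' = z1 <;> simp [h]
    field_simp
  have h2 : (∑ z' ∈ Finset.univ.filter (fun z' => z' ≠ zt ∧ 0 < pt1 p0 z1 t z'),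
        Romega p0 z1 ω t zt z' * pt1 p0 z1 t zt)
      = if z1 = zt then 0 else ω / (Zpos p0 z1 t : ℝ) := by
    rw [Finset.sum_congr rfl hterm2, Finset.sum_ite_eq']
    by_cases h : z1 = zt
    · simp [h]
    · simp [h, hz1pos]
  have hflow : netFlow p0 z1 t (Romega p0 z1 ω t) zt
      = if zt = z1 then ω * ((Zpos p0 z1 t : ℝ) - 1) / (Zpos p0 z1 t : ℝ)
        else -ω / (Zpos p0 z1 t : ℝ) := by
    unfold netFlow
    rw [h1, h2]
    by_cases h : zt = z1
    · simp [h]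
      ring
    · have h' : ¬ z1 = zt := fun hh => h hh.symm
      simp [h, h']
      ring
  have hmain : netFlow p0 z1 t (fun a b => Rstar a b + Romega p0 z1 ω t a b) zt -
        ((if zt = z1 then (1 : ℝ) else 0) - p0 zt)
      = if zt = z1 then ω * ((Zpos p0 z1 t : ℝ) - 1) / (Zpos p0 z1 t : ℝ)
        else -ω / (Zpos p0 z1 t : ℝ) := by
    rw [hlin, hK zt, hflow]; ring
  refine ⟨hmain, ?_⟩
  rw [hmain]
  by_cases h : zt = z1 <;> simp [h]
  · rw [abs_of_nonneg (div_nonneg (mul_nonneg hω.le (by linarith)) hNposR.le)]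
    rw [div_le_iff₀ hNposR]
    nlinarith
  · rw [abs_div, abs_neg, abs_of_pos hω, abs_of_pos hNposR, div_le_iff₀ hNposR]
    nlinarith
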